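/- Let W₁ be an m₁×n₁ real matrix and W₂ an m₂×n₂ real matrix, and let W be the (m₁+m₂)×(n₁+n₂) block-diagonal matrix with blocks W₁ and W₂. Let A₁ be an invertible n₁×n₁ real matrix, A₂ an invertible n₂×n₂ real matrix, and A₃ an arbitrary n₁×n₂ real matrix. Let A′ be the block upper-triangular matrix [[A₁, A₃],[0, A₂]] and A_d the block-diagonal matrix [[A₁, 0],[0, A₂]]. Then ‖A_d‖₂² · ‖W A_d⁻¹‖_F² ≤ ‖A′‖₂² · ‖W A′⁻¹‖_F²; that is, replacing A′ by its block-diagonal part never increases the total error of the block-diagonal workload W. -/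
import Mathlib


open Matrix BigOperators

/-- The maximum Euclidean (L2) column norm of a matrix (its L2 sensitivity). -/
noncomputable def l2Sens {ι κ : Type*} [Fintype ι] [Fintype κ] (A : Matrix ι κ ℝ) : ℝ :=
  ⨆ j, Real.sqrt (∑ i, (A i j) ^ 2)

/-- The squared Frobenius norm of a matrix. -/
def frobSq {ι κ : Type*} [Fintype ι] [Fintype κ] (M : Matrix ι κ ℝ) : ℝ :=
  ∑ i, ∑ j, (M i j) ^ 2

lemma frobSq_nonneg {ι κ : Type*} [Fintype ι] [Fintype κ] (M : Matrix ι κ ℝ) :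
    0 ≤ frobSq M :=
  Finset.sum_nonneg fun _ _ => Finset.sum_nonneg fun _ _ => sq_nonneg _

lemma l2Sens_nonneg {ι κ : Type*} [Fintype ι] [Fintype κ] (A : Matrix ι κ ℝ) :
    0 ≤ l2Sens A :=
  Real.iSup_nonneg fun _ => Real.sqrt_nonneg _

lemma l2Sens_mono {ι κ : Type*} [Fintype ι] [Fintype κ] {A B : Matrix ι κ ℝ}
    (h : ∀ j, ∑ i, (A i j) ^ 2 ≤ ∑ i, (B i j) ^ 2) : l2Sens A ≤ l2Sens B := by
  cases isEmpty_or_nonempty κ with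
  | inl he => simp [l2Sens, iSup_of_empty]
  | inr hn =>
    exact ciSup_mono (Set.Finite.bddAbove (Set.finite_range _))
      fun j => Real.sqrt_le_sqrt (h j)

lemma frobSq_fromBlocks {ι₁ ι₂ κ₁ κ₂ : Type*} [Fintype ι₁] [Fintype ι₂] [Fintype κ₁] [Fintype κ₂]
    (A : Matrix ι₁ κ₁ ℝ) (B : Matrix ι₁ κ₂ ℝ) (C : Matrix ι₂ κ₁ ℝ) (D : Matrix ι₂ κ₂ ℝ) :
    frobSq (Matrix.fromBlocks A B C D) = frobSq A + frobSq B + frobSq C + frobSq D := by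
  simp [frobSq, Fintype.sum_sum_type, Finset.sum_add_distrib]
  ring

/-- **Block-diagonal strategies suffice for block-diagonal workloads.**
For the block-diagonal workload `W = diag(W₁, W₂)` and a block upper-triangular
strategy `A′ = [[A₁, A₃],[0, A₂]]` with `A₁, A₂` invertible, the block-diagonal part
`A_d = [[A₁, 0],[0, A₂]]` satisfies
`‖A_d‖₂² ‖W A_d⁻¹‖_F² ≤ ‖A′‖₂² ‖W A′⁻¹‖_F²`. -/
theorem block_diagonal_strategy_better (m₁ m₂ n₁ n₂ : ℕ)
    (W₁ : Matrix (Fin m₁) (Fin n₁) ℝ) (W₂ : Matrix (Fin m₂) (Fin n₂) ℝ)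
    (A₁ : Matrix (Fin n₁) (Fin n₁) ℝ) (A₂ : Matrix (Fin n₂) (Fin n₂) ℝ)
    (A₃ : Matrix (Fin n₁) (Fin n₂) ℝ)
    (h₁ : IsUnit A₁.det) (h₂ : IsUnit A₂.det) :
    (l2Sens (Matrix.fromBlocks A₁ 0 0 A₂)) ^ 2 *
        frobSq (Matrix.fromBlocks W₁ 0 0 W₂ * (Matrix.fromBlocks A₁ 0 0 A₂)⁻¹)
      ≤ (l2Sens (Matrix.fromBlocks A₁ A₃ 0 A₂)) ^ 2 *
        frobSq (Matrix.fromBlocks W₁ 0 0 W₂ * (Matrix.fromBlocks A₁ A₃ 0 A₂)⁻¹) := by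
  have hA₁ : IsUnit A₁ := (Matrix.isUnit_iff_isUnit_det _).mpr h₁
  have hA₂ : IsUnit A₂ := (Matrix.isUnit_iff_isUnit_det _).mpr h₂
  have hiff : IsUnit A₁ ↔ IsUnit A₂ := iff_of_true hA₁ hA₂
  have hinv : (Matrix.fromBlocks A₁ A₃ 0 A₂)⁻¹ =
      Matrix.fromBlocks A₁⁻¹ (-(A₁⁻¹ * A₃ * A₂⁻¹)) 0 A₂⁻¹ :=
    Matrix.inv_fromBlocks_zero₂₁_of_isUnit_iff _ _ _ hiff
  have hinvd : (Matrix.fromBlocks A₁ (0 : Matrix (Fin n₁) (Fin n₂) ℝ) 0 A₂)⁻¹ =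
      Matrix.fromBlocks A₁⁻¹ 0 0 A₂⁻¹ := by
    have := Matrix.inv_fromBlocks_zero₂₁_of_isUnit_iff A₁ (0 : Matrix (Fin n₁) (Fin n₂) ℝ) A₂ hiff
    simpa using this
  -- frobenius comparison
  have hfrob : frobSq (Matrix.fromBlocks W₁ 0 0 W₂ * (Matrix.fromBlocks A₁ 0 0 A₂)⁻¹)
      ≤ frobSq (Matrix.fromBlocks W₁ 0 0 W₂ * (Matrix.fromBlocks A₁ A₃ 0 A₂)⁻¹) := by
    rw [hinv, hinvd, Matrix.fromBlocks_multiply, Matrix.fromBlocks_multiply]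
    simp only [Matrix.mul_zero, Matrix.zero_mul, add_zero, zero_add]
    rw [frobSq_fromBlocks, frobSq_fromBlocks]
    have h0 : frobSq (0 : Matrix (Fin m₁) (Fin n₂) ℝ) = 0 := by simp [frobSq]
    have h0' : frobSq (0 : Matrix (Fin m₂) (Fin n₁) ℝ) = 0 := by simp [frobSq]
    rw [h0, h0']
    have := frobSq_nonneg (W₁ * -(A₁⁻¹ * A₃ * A₂⁻¹))
    linarith
  -- sensitivity comparison
  have hsens : l2Sens (Matrix.fromBlocks A₁ (0 : Matrix (Fin n₁) (Fin n₂) ℝ) 0 A₂)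
      ≤ l2Sens (Matrix.fromBlocks A₁ A₃ 0 A₂) := by
    apply l2Sens_mono
    intro j
    cases j with
    | inl j => simp [Fintype.sum_sum_type]
    | inr j =>
      simp only [Fintype.sum_sum_type, Matrix.fromBlocks_apply₁₂, Matrix.fromBlocks_apply₂₂,
        Matrix.zero_apply]
      have : (0:ℝ) ≤ ∑ i, (A₃ i j) ^ 2 := Finset.sum_nonneg fun _ _ => sq_nonneg _
      simp only [ne_eq, OfNat.ofNat_ne_zero, not_false_eq_true, zero_pow, Finset.sum_const_zero]
      linarith
  exact mul_le_mul (pow_le_pow_left₀ (l2Sens_nonneg _) hsens 2) hfrob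
    (frobSq_nonneg _) (sq_nonneg _)
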